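/- arXiv:1810.01634 — 2 statements merged into one kernel-verified Lean document; each statement's English description precedes it below -/
import Mathlib

section
/- Let a be a nonzero element of ℤ[α]. Then |a| ≥ 1/(P_α·S_α·opc(a)^{m−1}), where S_α := 1 + |α| + |α|² + ⋯ + |α|^{m−1}, P_α := m·‖f‖₂^{m−1}·(M_α + √m)^{m−1}, and M_α := m(1+‖f‖_∞)^{m−1}. -/
open Polynomial Finset

/-- The Euclidean norm of the coefficient vector `(p_0, …, p_{d-1})` of a polynomial. -/
noncomputable def normTwo (d : ℕ) (p : Polynomial ℤ) : ℝ :=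
  Real.sqrt (∑ i ∈ Finset.range d, ((p.coeff i : ℝ)) ^ 2)

/-- `‖f‖_∞` over the coefficients `f_0, …, f_{m-1}`. -/
def fninf (m : ℕ) (f : Polynomial ℤ) : ℤ :=
  ((Finset.univ.sup fun i : Fin m => (f.coeff (i : ℕ)).natAbs : ℕ) : ℤ)

/-- `M_α = m (1 + ‖f‖_∞)^{m-1}`. -/
noncomputable def Malpha (m : ℕ) (f : Polynomial ℤ) : ℝ :=
  (m : ℝ) * (1 + (fninf m f : ℝ)) ^ (m - 1)

/-- `P_α = m ‖f‖₂^{m-1} (M_α + √m)^{m-1}`. -/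
noncomputable def Palpha (m : ℕ) (f : Polynomial ℤ) : ℝ :=
  (m : ℝ) * normTwo (m + 1) f ^ (m - 1) * (Malpha m f + Real.sqrt m) ^ (m - 1)

/-- `S_α = 1 + |α| + ⋯ + |α|^{m-1}`. -/
noncomputable def Salpha (m : ℕ) (α : ℝ) : ℝ := ∑ k ∈ Finset.range m, |α| ^ k

/-- `opc a` for a coefficient vector `a`. -/
def opc {m : ℕ} (a : Fin m → ℤ) : ℤ :=
  ((Finset.univ.sup fun i => (a i).natAbs : ℕ) : ℤ)

/-!
The norm of a nonzero algebraic integer is a nonzero rational integer, so it has absolute value at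
least `1`. For `a = ∑ aᵢ αⁱ` that norm is the product of the conjugates `∑ aᵢ σ(α)ⁱ`, where `σ(α)`
runs over roots of `f`. By Cauchy's bound every root of `f` has modulus at most `1 + ‖f‖_∞`, so each
of the at most `m - 1` conjugates other than `a` itself has modulus at most `opc(a) · M_α`. Hence
`|a| ≥ (opc(a) · M_α)^{-(m-1)}`, which is stronger than the claim because `M_α^{m-1} ≤ P_α S_α`.
-/

open Module

theorem one_le_norm_mul_pow_finrank_of_forall_norm_le {K : Type*} [Field K] [Algebra ℚ K]
    [FiniteDimensional ℚ K] {y : K} (hy : IsIntegral ℤ y) (hy0 : y ≠ 0) (σ₀ : K →ₐ[ℚ] ℂ) {C : ℝ}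
    (hC : ∀ σ : K →ₐ[ℚ] ℂ, ‖σ y‖ ≤ C) : 1 ≤ ‖σ₀ y‖ * C ^ (finrank ℚ K - 1) := by
  classical
  obtain ⟨n, hn⟩ := IsIntegrallyClosed.isIntegral_iff.mp (Algebra.isIntegral_norm ℚ hy)
  have hn0 : n ≠ 0 := by
    rintro rfl
    exact Algebra.norm_ne_zero_iff.mpr hy0 (by rw [← hn, map_zero])
  calc (1 : ℝ) ≤ |(n : ℝ)| := by exact_mod_cast Int.one_le_abs hn0
    _ = ‖algebraMap ℚ ℂ (Algebra.norm ℚ y)‖ := by rw [← hn]; simp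
    _ = ∏ σ : K →ₐ[ℚ] ℂ, ‖σ y‖ := by rw [Algebra.norm_eq_prod_embeddings, norm_prod]
    _ = ‖σ₀ y‖ * ∏ σ ∈ univ.erase σ₀, ‖σ y‖ := (mul_prod_erase _ _ (mem_univ σ₀)).symm
    _ ≤ ‖σ₀ y‖ * C ^ (finrank ℚ K - 1) := by
      gcongr
      calc _ ≤ ∏ _σ ∈ univ.erase σ₀, C := prod_le_prod (fun _ _ => norm_nonneg _) fun σ _ => hC σ
        _ = _ := by rw [prod_const, card_erase_of_mem (mem_univ _), card_univ, AlgHom.card]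

open IntermediateField in
theorem one_le_abs_aeval_mul_pow {f : ℤ[X]} (hf : f.Monic) {α : ℝ} (hα : aeval α f = 0)
    {p : ℤ[X]} (hp : aeval α p ≠ 0) {C : ℝ} (hC1 : 1 ≤ C)
    (hC : ∀ z : ℂ, aeval z f = 0 → ‖aeval z p‖ ≤ C) :
    1 ≤ |aeval α p| * C ^ (f.natDegree - 1) := by
  have hαℚ : IsIntegral ℚ α := (show IsIntegral ℤ α from ⟨f, hf, hα⟩).tower_top
  have : FiniteDimensional ℚ ℚ⟮α⟯ := adjoin.finiteDimensional hαℚ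
  set θ := AdjoinSimple.gen ℚ α
  have hθα : algebraMap ℚ⟮α⟯ ℝ θ = α := AdjoinSimple.algebraMap_gen ℚ α
  have hθ : aeval θ f = 0 :=
    (algebraMap ℚ⟮α⟯ ℝ).injective (by rw [map_zero, ← aeval_algebraMap_apply, hθα, hα])
  have hy : algebraMap ℚ⟮α⟯ ℝ (aeval θ p) = aeval α p := by rw [← aeval_algebraMap_apply, hθα]
  have hy_int : IsIntegral ℤ (aeval θ p) :=
    adjoin_le_integralClosure ⟨f, hf, hθ⟩ (aeval_mem_adjoin_singleton ℤ θ)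
  have hy0 : aeval θ p ≠ 0 := by rintro h; rw [h, map_zero] at hy; exact hp hy.symm
  have hfinrank : finrank ℚ ℚ⟮α⟯ ≤ f.natDegree := by
    rw [adjoin.finrank hαℚ, ← hf.natDegree_map (algebraMap ℤ ℚ)]
    exact natDegree_le_of_dvd (minpoly.dvd ℚ α (by rw [aeval_map_algebraMap, hα]))
      (hf.map _).ne_zero
  have hconj (σ : ℚ⟮α⟯ →ₐ[ℚ] ℂ) : ‖σ (aeval θ p)‖ ≤ C := by
    have hσ : ∀ q : ℤ[X], σ (aeval θ q) = aeval (σ θ) q := fun q =>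
      (aeval_algHom_apply σ.toRingHom.toIntAlgHom θ q).symm
    exact hσ p ▸ hC _ (by rw [← hσ, hθ, map_zero])
  let σ₀ : ℚ⟮α⟯ →ₐ[ℚ] ℂ := (Complex.ofRealAm.restrictScalars ℚ).comp (val ℚ⟮α⟯)
  calc (1 : ℝ) ≤ ‖σ₀ (aeval θ p)‖ * C ^ (finrank ℚ ℚ⟮α⟯ - 1) :=
        one_le_norm_mul_pow_finrank_of_forall_norm_le hy_int hy0 σ₀ hconj
    _ ≤ |aeval α p| * C ^ (f.natDegree - 1) := by
      rw [show σ₀ (aeval θ p) = (aeval α p : ℂ) from congrArg Complex.ofReal hy,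
        Complex.norm_real, Real.norm_eq_abs]
      gcongr

section Heights

variable {m : ℕ}

theorem opc_nonneg (a : Fin m → ℤ) : 0 ≤ opc a := by
  unfold opc; positivity

theorem abs_le_opc (a : Fin m → ℤ) (i : Fin m) : |a i| ≤ opc a := by
  rw [opc, Int.abs_eq_natAbs]
  exact_mod_cast le_sup (f := fun i => (a i).natAbs) (mem_univ i)

theorem one_le_opc {a : Fin m → ℤ} (ha : a ≠ 0) : 1 ≤ opc a := by
  obtain ⟨i, hi⟩ := Function.ne_iff.mp ha
  exact (Int.one_le_abs hi).trans (abs_le_opc a i)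

theorem fninf_nonneg (f : ℤ[X]) : 0 ≤ fninf m f := by
  unfold fninf; positivity

theorem abs_coeff_le_fninf (f : ℤ[X]) {i : ℕ} (hi : i < m) : |f.coeff i| ≤ fninf m f :=
  abs_le_opc (fun j : Fin m => f.coeff j) ⟨i, hi⟩

end Heights

theorem norm_le_one_add_fninf {f : ℤ[X]} (hf : f.Monic) {z : ℂ} (hz : aeval z f = 0) :
    ‖z‖ ≤ 1 + fninf f.natDegree f := by
  set p := f.map (algebraMap ℤ ℂ)
  have hroot : p.IsRoot z := by rwa [IsRoot, eval_map_algebraMap]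
  let B : NNReal := ⟨fninf f.natDegree f, by exact_mod_cast fninf_nonneg f⟩
  have hbound : cauchyBound p ≤ B + 1 := by
    rw [cauchyBound, (hf.map _).leadingCoeff, nnnorm_one, div_one, hf.natDegree_map]
    gcongr
    refine Finset.sup_le fun i hi => ?_
    rw [← NNReal.coe_le_coe, coe_nnnorm, coeff_map, algebraMap_int_eq, eq_intCast,
      Complex.norm_intCast]
    show _ ≤ (fninf f.natDegree f : ℝ)
    exact_mod_cast abs_coeff_le_fninf f (mem_range.mp hi)
  have := (hroot.norm_lt_cauchyBound (hf.map _).ne_zero).le.trans hbound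
  rwa [← NNReal.coe_le_coe, NNReal.coe_add, NNReal.coe_one, coe_nnnorm, add_comm] at this

theorem norm_sum_intCast_mul_pow_le {m : ℕ} (a : Fin m → ℤ) {z : ℂ} {R : ℝ} (hR : 1 ≤ R)
    (hz : ‖z‖ ≤ R) : ‖∑ i, (a i : ℂ) * z ^ (i : ℕ)‖ ≤ m * opc a * R ^ (m - 1) := by
  calc ‖∑ i, (a i : ℂ) * z ^ (i : ℕ)‖ ≤ ∑ i, ‖(a i : ℂ) * z ^ (i : ℕ)‖ := norm_sum_le _ _
    _ ≤ ∑ _i : Fin m, (opc a : ℝ) * R ^ (m - 1) := by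
      gcongr with i
      rw [norm_mul, norm_pow, Complex.norm_intCast]
      gcongr
      · exact_mod_cast opc_nonneg a
      · exact_mod_cast abs_le_opc a i
      · calc ‖z‖ ^ (i : ℕ) ≤ R ^ (i : ℕ) := pow_le_pow_left₀ (norm_nonneg z) hz _
          _ ≤ R ^ (m - 1) := pow_le_pow_right₀ hR (Nat.le_pred_of_lt i.isLt)
    _ = m * opc a * R ^ (m - 1) := by
      rw [sum_const, card_univ, Fintype.card_fin, nsmul_eq_mul, mul_assoc]

theorem norm_sum_le_opc_mul_Malpha {m : ℕ} {f : ℤ[X]} (hf : f.Monic) (hdeg : f.natDegree = m)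
    (a : Fin m → ℤ) {z : ℂ} (hz : aeval z f = 0) :
    ‖∑ i, (a i : ℂ) * z ^ (i : ℕ)‖ ≤ opc a * Malpha m f := by
  subst hdeg
  have : (0 : ℝ) ≤ fninf f.natDegree f := by exact_mod_cast fninf_nonneg f
  calc _ ≤ f.natDegree * opc a * (1 + fninf f.natDegree f : ℝ) ^ (f.natDegree - 1) :=
        norm_sum_intCast_mul_pow_le a (by linarith) (norm_le_one_add_fninf hf hz)
    _ = opc a * Malpha f.natDegree f := by rw [Malpha]; ring

theorem one_le_normTwo {f : ℤ[X]} (hf : f.Monic) : 1 ≤ normTwo (f.natDegree + 1) f := by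
  rw [normTwo, Real.one_le_sqrt]
  calc (1 : ℝ) = (f.coeff f.natDegree : ℝ) ^ 2 := by rw [hf.coeff_natDegree]; norm_num
    _ ≤ ∑ i ∈ range (f.natDegree + 1), (f.coeff i : ℝ) ^ 2 :=
      single_le_sum (f := fun i => (f.coeff i : ℝ) ^ 2) (fun i _ => sq_nonneg _)
        (self_mem_range_succ _)

theorem one_le_Salpha {m : ℕ} (hm : 1 ≤ m) (α : ℝ) : 1 ≤ Salpha m α := by
  simpa [Salpha] using single_le_sum (fun k _ => pow_nonneg (abs_nonneg α) k) (mem_range.mpr hm)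

theorem one_le_Malpha {m : ℕ} (hm : 1 ≤ m) (f : ℤ[X]) : 1 ≤ Malpha m f := by
  have : (0 : ℝ) ≤ fninf m f := by exact_mod_cast fninf_nonneg f
  exact one_le_mul_of_one_le_of_one_le (by exact_mod_cast hm) (one_le_pow₀ (by linarith))

theorem Malpha_pow_le_Palpha_mul_Salpha {m : ℕ} (hm : 1 ≤ m) {f : ℤ[X]} (hf : f.Monic)
    (hdeg : f.natDegree = m) (α : ℝ) : Malpha m f ^ (m - 1) ≤ Palpha m f * Salpha m α := by
  have hM : 0 ≤ Malpha m f := zero_le_one.trans (one_le_Malpha hm f)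
  have hX : 0 ≤ (Malpha m f + Real.sqrt m) ^ (m - 1) := by positivity
  have hc : 1 ≤ (m : ℝ) * normTwo (m + 1) f ^ (m - 1) :=
    one_le_mul_of_one_le_of_one_le (by exact_mod_cast hm) (one_le_pow₀ (hdeg ▸ one_le_normTwo hf))
  calc Malpha m f ^ (m - 1) ≤ (Malpha m f + Real.sqrt m) ^ (m - 1) :=
        pow_le_pow_left₀ hM (le_add_of_nonneg_right (Real.sqrt_nonneg m)) _
    _ ≤ m * normTwo (m + 1) f ^ (m - 1) * (Malpha m f + Real.sqrt m) ^ (m - 1) :=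
        le_mul_of_one_le_left hX hc
    _ ≤ Palpha m f * Salpha m α :=
        le_mul_of_one_le_right (mul_nonneg (by linarith) hX) (one_le_Salpha hm α)

theorem stmt_5_general (m : ℕ) (f : Polynomial ℤ)
    (hmonic : f.Monic) (hdeg : f.natDegree = m)
    (α : ℝ) (hroot : Polynomial.aeval α f = 0)
    (a : Fin m → ℤ) (ha : (∑ i, (a i : ℝ) * α ^ (i : ℕ)) ≠ 0) :
    |∑ i, (a i : ℝ) * α ^ (i : ℕ)| ≥
      1 / (Palpha m f * Salpha m α * ((opc a : ℤ) : ℝ) ^ (m - 1)) := by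
  have ha0 : a ≠ 0 := by rintro rfl; simp at ha
  have hm : 1 ≤ m := (Function.ne_iff.mp ha0).choose.pos
  have hopc : (1 : ℝ) ≤ opc a := by exact_mod_cast one_le_opc ha0
  have hPS := Malpha_pow_le_Palpha_mul_Salpha hm hmonic hdeg α
  have hPS_pos : 0 < Palpha m f * Salpha m α :=
    hPS.trans_lt' (pow_pos (by linarith [one_le_Malpha hm f]) _)
  let p : ℤ[X] := ∑ i, C (a i) * X ^ (i : ℕ)
  have hp {A : Type} [CommRing A] (x : A) : aeval x p = ∑ i, (a i : A) * x ^ (i : ℕ) := by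
    simp [p]
  have key := one_le_abs_aeval_mul_pow hmonic hroot (p := p) (by rwa [hp])
    (one_le_mul_of_one_le_of_one_le hopc (one_le_Malpha hm f))
    fun z hz => hp z ▸ norm_sum_le_opc_mul_Malpha hmonic hdeg a hz
  rw [hp, hdeg, mul_pow] at key
  rw [ge_iff_le, div_le_iff₀ (by positivity)]
  refine key.trans ?_
  rw [mul_comm (Palpha m f * Salpha m α)]
  gcongr

theorem stmt_5 (m : ℕ) (hm : 1 ≤ m) (f : Polynomial ℤ)
    (hmonic : f.Monic) (hdeg : f.natDegree = m)
    (hirr : Irreducible (f.map (Int.castRingHom ℚ)))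
    (α : ℝ) (hroot : Polynomial.aeval α f = 0)
    (a : Fin m → ℤ) (ha : (∑ i, (a i : ℝ) * α ^ (i : ℕ)) ≠ 0) :
    |∑ i, (a i : ℝ) * α ^ (i : ℕ)| ≥
      1 / (Palpha m f * Salpha m α * ((opc a : ℤ) : ℝ) ^ (m - 1)) :=
  stmt_5_general m f hmonic hdeg α hroot a ha
end

section
/- Let b_1, …, b_n ∈ ℝ^n be linearly independent with Gram–Schmidt orthogonalization b_1*, …, b_n*, let B := max_{1≤i≤n} ‖b_i‖₂², and let L > 0 be such that every nonzero vector of the lattice Λ = {c_1 b_1 + ⋯ + c_n b_n : c_i ∈ ℤ} has squared norm at least L. Set d_j := ∏_{i=1}^{j} ‖b_i*‖₂² and D := d_1·d_2⋯d_n. Then (L/n)^{n(n+1)/2} ≤ D ≤ B^{n(n+1)/2}. -/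
/-!
The upper bound holds factor by factor, since `‖b_i*‖ ≤ ‖b_i‖`. For the lower bound, `d_j` is the
squared covolume of the lattice spanned by `b_1, …, b_j`: in the orthonormal basis
`b_l* / ‖b_l*‖` of its span, the generators form a lower triangular matrix with diagonal `‖b_l*‖`.
Minkowski's theorem for the cube `[-t, t]^j` with `t^j = √d_j` gives a nonzero lattice vector of
squared norm at most `j t² = j d_j^(1/j)`, hence `L ≤ j d_j^(1/j)`, i.e. `(L/n)^j ≤ (L/j)^j ≤ d_j`.
Multiplying over `j` gives both bounds.
-/

open Finset Matrix MeasureTheory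

section DotProduct

variable {R κ : Type*} [Field R] [LinearOrder R] [IsStrictOrderedRing R] [Fintype κ]

theorem dotProduct_self_nonneg (v : κ → R) : 0 ≤ v ⬝ᵥ v :=
  sum_nonneg fun k _ => mul_self_nonneg (v k)

theorem dotProduct_self_pos {v : κ → R} (hv : v ≠ 0) : 0 < v ⬝ᵥ v :=
  (dotProduct_self_nonneg v).lt_of_ne (Ne.symm (dotProduct_self_eq_zero.not.2 hv))

theorem dotProduct_div_dotProduct_self_mul (x y : κ → R) :
    x ⬝ᵥ y / (y ⬝ᵥ y) * (y ⬝ᵥ y) = x ⬝ᵥ y := by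
  rcases eq_or_ne y 0 with rfl | hy
  · simp
  · exact div_mul_cancel₀ _ (dotProduct_self_eq_zero.not.2 hy)

theorem dotProduct_self_div_smul_self (y : κ → R) :
    (y ⬝ᵥ y / (y ⬝ᵥ y)) • y = y := by
  rcases eq_or_ne y 0 with rfl | hy
  · simp
  · rw [div_self (dotProduct_self_eq_zero.not.2 hy), one_smul]

end DotProduct

theorem sum_sq_eq_dotProduct_self {R κ : Type*} [CommSemiring R] [Fintype κ] (v : κ → R) :
    ∑ k, v k ^ 2 = v ⬝ᵥ v :=
  sum_congr rfl fun k _ => sq (v k)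

theorem sum_smul_dotProduct_sum_smul_of_orthonormal {R ι κ : Type*} [CommRing R] [Fintype ι]
    [DecidableEq ι] [Fintype κ] {w : ι → κ → R}
    (hw : ∀ k l, w k ⬝ᵥ w l = if k = l then 1 else 0) (y : ι → R) :
    (∑ l, y l • w l) ⬝ᵥ (∑ l, y l • w l) = y ⬝ᵥ y := by
  simp only [sum_dotProduct, dotProduct_sum, smul_dotProduct, dotProduct_smul, hw, smul_eq_mul,
    mul_ite, mul_one, mul_zero, sum_ite_eq', mem_univ, if_true]
  rfl

theorem exists_ne_zero_mem_span_int_abs_le {ι : Type*} [Fintype ι] [DecidableEq ι] [Nonempty ι]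
    {u : ι → ι → ℝ} (hu : LinearIndependent ℝ u) {t : ℝ} (ht : 0 ≤ t)
    (hdet : |(Matrix.of u).det| ≤ t ^ Fintype.card ι) :
    ∃ x ∈ Submodule.span ℤ (Set.range u), x ≠ 0 ∧ ∀ l, |x l| ≤ t := by
  let e : Module.Basis ι ℝ (ι → ℝ) := basisOfLinearIndependentOfCardEqFinrank hu (by simp)
  have he : ⇑e = u := coe_basisOfLinearIndependentOfCardEqFinrank hu _
  let S : Set (ι → ℝ) := Set.univ.pi fun _ => Set.Icc (-t) t
  have hsymm : ∀ x ∈ S, -x ∈ S := fun x hx l _ => by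
    simpa [and_comm, neg_le] using hx l trivial
  have hvol : volume (ZSpan.fundamentalDomain e) * 2 ^ Module.finrank ℝ (ι → ℝ) ≤ volume S := by
    rw [ZSpan.volume_fundamentalDomain, he, volume_pi_pi, Module.finrank_fintype_fun_eq_card]
    simp only [Real.volume_Icc, prod_const, card_univ]
    rw [← ENNReal.ofReal_pow (by linarith), show (2 : ENNReal) ^ Fintype.card ι =
      ENNReal.ofReal (2 ^ Fintype.card ι) by simp, ← ENNReal.ofReal_mul (abs_nonneg _)]
    refine ENNReal.ofReal_le_ofReal ?_
    rw [show t - -t = 2 * t by ring, mul_pow, mul_comm]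
    gcongr
  have : Countable (Submodule.span ℤ (Set.range e)).toAddSubgroup :=
    inferInstanceAs (Countable (Submodule.span ℤ (Set.range e)))
  obtain ⟨x, hx0, hxS⟩ := exists_ne_zero_mem_lattice_of_measure_mul_two_pow_le_measure
    (ZSpan.isAddFundamentalDomain' e volume) hsymm (convex_pi fun _ _ => convex_Icc _ _)
    (isCompact_univ_pi fun _ => isCompact_Icc) hvol
  refine ⟨x, he ▸ x.2, by simpa using hx0, fun l => abs_le.2 (hxS l trivial)⟩

/-- Coordinates with respect to the orthonormal family `w` map the lattice spanned by `b`
isometrically onto the one spanned by the rows of the coordinate matrix, where the cube version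
of Minkowski's theorem applies. -/
theorem exists_ne_zero_mem_span_int_dotProduct_self_le {ι κ : Type*} [Fintype ι] [DecidableEq ι]
    [Nonempty ι] [Fintype κ] {b w : ι → κ → ℝ}
    (hw : ∀ k l, w k ⬝ᵥ w l = if k = l then 1 else 0) (hb : ∀ i, ∑ l, (b i ⬝ᵥ w l) • w l = b i)
    (hind : LinearIndependent ℝ b) {t : ℝ} (ht : 0 ≤ t)
    (hdet : |(Matrix.of fun i l => b i ⬝ᵥ w l).det| ≤ t ^ Fintype.card ι) :
    ∃ v ∈ Submodule.span ℤ (Set.range b), v ≠ 0 ∧ v ⬝ᵥ v ≤ Fintype.card ι * t ^ 2 := by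
  set S := Fintype.linearCombination ℝ w
  have hS : ∀ y, S y ⬝ᵥ S y = y ⬝ᵥ y := fun y => by
    rw [Fintype.linearCombination_apply, sum_smul_dotProduct_sum_smul_of_orthonormal hw]
  have hSb : S ∘ (fun i l => b i ⬝ᵥ w l) = b := funext fun i => by
    rw [Function.comp_apply, Fintype.linearCombination_apply, hb]
  obtain ⟨x, hx, hx0, hxt⟩ :=
    exists_ne_zero_mem_span_int_abs_le (LinearIndependent.of_comp S (by rwa [hSb])) ht hdet
  refine ⟨S x, ?_, ?_, ?_⟩
  · have := Submodule.mem_map_of_mem (f := S.restrictScalars ℤ) hx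
    rwa [Submodule.map_span, LinearMap.coe_restrictScalars, ← Set.range_comp, hSb] at this
  · exact fun h => hx0 (dotProduct_self_eq_zero.1 (by rw [← hS, h, zero_dotProduct]))
  · calc S x ⬝ᵥ S x = ∑ l, |x l| ^ 2 := by
          rw [hS]; exact sum_congr rfl fun l _ => by rw [sq_abs, sq]
      _ ≤ ∑ _l : ι, t ^ 2 := sum_le_sum fun l _ => pow_le_pow_left₀ (abs_nonneg _) (hxt l) 2
      _ = Fintype.card ι * t ^ 2 := by simp

section GramSchmidt

variable {R ι κ : Type*} [Field R] [LinearOrder ι] [LocallyFiniteOrderBot ι] [Fintype κ]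

/-- The coefficient `μ_il` is inlined; when `bstar l = 0` its junk value multiplies the zero
vector. -/
def IsGramSchmidt (b bstar : ι → κ → R) : Prop :=
  ∀ i, bstar i = b i - ∑ l ∈ Iio i, (b i ⬝ᵥ bstar l / (bstar l ⬝ᵥ bstar l)) • bstar l

namespace IsGramSchmidt

variable {b bstar : ι → κ → R}

theorem eq_add_sum (h : IsGramSchmidt b bstar) (i : ι) :
    b i = bstar i + ∑ l ∈ Iio i, (b i ⬝ᵥ bstar l / (bstar l ⬝ᵥ bstar l)) • bstar l := by
  rw [h i, sub_add_cancel]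

theorem comp_castLE {n m : ℕ} {b bstar : Fin n → κ → R} (h : IsGramSchmidt b bstar)
    (hmn : m ≤ n) :
    IsGramSchmidt (fun i => b (Fin.castLE hmn i)) (fun i => bstar (Fin.castLE hmn i)) :=
  fun i => (h _).trans (by rw [Fin.sum_Iio_castLE])

variable [WellFoundedLT ι]

theorem mem_span_image_Iic (h : IsGramSchmidt b bstar) (i : ι) :
    bstar i ∈ Submodule.span R (b '' Set.Iic i) := by
  induction i using WellFoundedLT.induction with
  | ind i ih =>
    rw [h i]
    refine Submodule.sub_mem _ (Submodule.subset_span ⟨i, le_rfl, rfl⟩)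
      (Submodule.sum_mem _ fun l hl => Submodule.smul_mem _ _ ?_)
    exact Submodule.span_mono (Set.image_mono (Set.Iic_subset_Iic.2 (mem_Iio.1 hl).le))
      (ih l (mem_Iio.1 hl))

theorem ne_zero (h : IsGramSchmidt b bstar) (hind : LinearIndependent R b) (i : ι) :
    bstar i ≠ 0 := by
  intro h0
  have hmem : b i ∈ Submodule.span R (b '' Set.Iio i) := by
    rw [h.eq_add_sum i, h0, zero_add]
    refine Submodule.sum_mem _ fun l hl => Submodule.smul_mem _ _ ?_
    exact Submodule.span_mono (Set.image_mono (Set.Iic_subset_Iio.2 (mem_Iio.1 hl)))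
      (h.mem_span_image_Iic l)
  exact hind.notMem_span_image (s := Set.Iio i) (by simp) hmem

variable [LinearOrder R] [IsStrictOrderedRing R]

theorem dotProduct_eq_zero_of_lt (h : IsGramSchmidt b bstar) {i l : ι} (hli : l < i) :
    bstar i ⬝ᵥ bstar l = 0 := by
  induction i using WellFoundedLT.induction generalizing l with
  | ind i ih =>
    rw [h i, sub_dotProduct, sum_dotProduct, sum_eq_single_of_mem l (mem_Iio.2 hli),
      smul_dotProduct, smul_eq_mul, dotProduct_div_dotProduct_self_mul, sub_self]
    intro k hk hkl
    suffices bstar k ⬝ᵥ bstar l = 0 by rw [smul_dotProduct, this, smul_zero]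
    rcases hkl.lt_or_gt with hkl | hlk
    · rw [dotProduct_comm]; exact ih l hli hkl
    · exact ih k (mem_Iio.1 hk) hlk

theorem dotProduct_eq_zero (h : IsGramSchmidt b bstar) {i l : ι} (hil : i ≠ l) :
    bstar i ⬝ᵥ bstar l = 0 := by
  rcases hil.lt_or_gt with hil | hli
  · rw [dotProduct_comm]; exact h.dotProduct_eq_zero_of_lt hil
  · exact h.dotProduct_eq_zero_of_lt hli

theorem dotProduct_of_le (h : IsGramSchmidt b bstar) {i l : ι} (hil : i ≤ l) :
    b i ⬝ᵥ bstar l = bstar i ⬝ᵥ bstar l := by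
  rw [h.eq_add_sum i, add_dotProduct, sum_dotProduct, sum_eq_zero, add_zero]
  intro k hk
  rw [smul_dotProduct, h.dotProduct_eq_zero ((mem_Iio.1 hk).trans_le hil).ne, smul_zero]

theorem sum_smul_eq [Fintype ι] (h : IsGramSchmidt b bstar) (i : ι) :
    ∑ l, (b i ⬝ᵥ bstar l / (bstar l ⬝ᵥ bstar l)) • bstar l = b i := by
  have hvanish : ∀ l ∈ univ, l ∉ Iic i →
      (b i ⬝ᵥ bstar l / (bstar l ⬝ᵥ bstar l)) • bstar l = 0 := by
    intro l _ hl
    have hil : i < l := not_le.1 (mem_Iic.not.1 hl)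
    rw [h.dotProduct_of_le hil.le, h.dotProduct_eq_zero hil.ne, zero_div, zero_smul]
  rw [← sum_subset (subset_univ _) hvanish, ← Iio_insert, sum_insert (by simp),
    h.dotProduct_of_le le_rfl, dotProduct_self_div_smul_self, ← h.eq_add_sum]

theorem dotProduct_self_le (h : IsGramSchmidt b bstar) (i : ι) :
    bstar i ⬝ᵥ bstar i ≤ b i ⬝ᵥ b i := by
  set r := ∑ l ∈ Iio i, (b i ⬝ᵥ bstar l / (bstar l ⬝ᵥ bstar l)) • bstar l
  have hr : bstar i ⬝ᵥ r = 0 := by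
    rw [dotProduct_sum, sum_eq_zero]
    intro l hl
    rw [dotProduct_smul, h.dotProduct_eq_zero_of_lt (mem_Iio.1 hl), smul_zero]
  have hrr := dotProduct_self_nonneg r
  rw [h.eq_add_sum i, add_dotProduct, dotProduct_add, dotProduct_add, dotProduct_comm r, hr]
  linarith

theorem prod_dotProduct_self_le_pow [Fintype ι] (h : IsGramSchmidt b bstar) {B : R}
    (hB : ∀ i, b i ⬝ᵥ b i ≤ B) : ∏ i, bstar i ⬝ᵥ bstar i ≤ B ^ Fintype.card ι :=
  calc ∏ i, bstar i ⬝ᵥ bstar i ≤ ∏ _i : ι, B :=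
        prod_le_prod (fun i _ => dotProduct_self_nonneg _) fun i _ =>
          (h.dotProduct_self_le i).trans (hB i)
    _ = B ^ Fintype.card ι := by rw [prod_const, card_univ]

end IsGramSchmidt

end GramSchmidt

theorem IsGramSchmidt.div_pow_le_prod_dotProduct_self {κ : Type*} [Fintype κ] {m : ℕ}
    {b bstar : Fin m → κ → ℝ} (h : IsGramSchmidt b bstar) (hind : LinearIndependent ℝ b)
    {L : ℝ} (hL : 0 ≤ L) (hmin : ∀ v ∈ Submodule.span ℤ (Set.range b), v ≠ 0 → L ≤ v ⬝ᵥ v) :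
    (L / m) ^ m ≤ ∏ l, bstar l ⬝ᵥ bstar l := by
  rcases Nat.eq_zero_or_pos m with rfl | hm
  · simp
  have : Nonempty (Fin m) := ⟨⟨0, hm⟩⟩
  set N : Fin m → ℝ := fun l => √(bstar l ⬝ᵥ bstar l)
  have hN : ∀ l, 0 < N l := fun l => Real.sqrt_pos.2 (dotProduct_self_pos (h.ne_zero hind l))
  have hNN : ∀ l, N l * N l = bstar l ⬝ᵥ bstar l :=
    fun l => Real.mul_self_sqrt (dotProduct_self_nonneg _)
  set w : Fin m → κ → ℝ := fun l => (N l)⁻¹ • bstar l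
  have hbw : ∀ i l, b i ⬝ᵥ w l = (N l)⁻¹ * (b i ⬝ᵥ bstar l) := fun i l => dotProduct_smul ..
  have hw : ∀ k l, w k ⬝ᵥ w l = if k = l then 1 else 0 := by
    intro k l
    simp only [w, smul_dotProduct, dotProduct_smul, smul_eq_mul]
    split_ifs with hkl
    · subst hkl; rw [← hNN]; field_simp [(hN k).ne']
    · rw [h.dotProduct_eq_zero hkl, mul_zero, mul_zero]
  have hb : ∀ i, ∑ l, (b i ⬝ᵥ w l) • w l = b i := by
    intro i
    conv_rhs => rw [← h.sum_smul_eq i]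
    refine sum_congr rfl fun l _ => ?_
    rw [hbw, smul_smul, ← hNN]
    congr 1
    field_simp
  have hdet : (Matrix.of fun i l => b i ⬝ᵥ w l).det = ∏ l, N l := by
    rw [det_of_isLowerTriangular]
    · refine prod_congr rfl fun l _ => ?_
      rw [of_apply, hbw, h.dotProduct_of_le le_rfl, ← hNN]
      field_simp [(hN l).ne']
    · intro i l hli
      have hil : i < l := OrderDual.toDual_lt_toDual.1 hli
      rw [of_apply, hbw, h.dotProduct_of_le hil.le, h.dotProduct_eq_zero hil.ne, mul_zero]
  have hdet_pos : 0 < ∏ l, N l := prod_pos fun l _ => hN l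
  set t := (∏ l, N l) ^ ((m : ℝ)⁻¹)
  have ht : t ^ m = ∏ l, N l := Real.rpow_inv_natCast_pow hdet_pos.le hm.ne'
  obtain ⟨v, hv, hv0, hvt⟩ := exists_ne_zero_mem_span_int_dotProduct_self_le hw hb hind
    (Real.rpow_nonneg hdet_pos.le _) (by rw [hdet, abs_of_pos hdet_pos, Fintype.card_fin, ht])
  rw [Fintype.card_fin] at hvt
  by_contra! hlt
  have htL : t ^ 2 < L / m := by
    refine lt_of_pow_lt_pow_left₀ m (by positivity) ?_
    rw [← pow_mul, mul_comm, pow_mul, ht, ← prod_pow]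
    simpa only [sq, hNN] using hlt
  have hmL : (m : ℝ) * t ^ 2 < L := by rwa [lt_div_iff₀' (by positivity)] at htL
  linarith [hmin v hv hv0]

theorem pow_mul_succ_div_two_eq_prod_range {M : Type*} [CommMonoid M] (x : M) (n : ℕ) :
    x ^ (n * (n + 1) / 2) = ∏ j ∈ range n, x ^ (j + 1) := by
  have := sum_range_succ' (fun i => i) n
  rw [sum_range_id, add_zero, Nat.add_sub_cancel, mul_comm] at this
  rw [prod_pow_eq_pow_sum, ← this]

theorem prod_filter_val_lt_eq_prod_castLE {M : Type*} [CommMonoid M] {m n : ℕ} (hmn : m ≤ n)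
    (f : Fin n → M) :
    ∏ l ∈ univ.filter (fun l : Fin n => (l : ℕ) < m), f l = ∏ l : Fin m, f (Fin.castLE hmn l) := by
  have hset : univ.filter (fun l : Fin n => (l : ℕ) < m) = univ.map (Fin.castLEEmb hmn) := by
    ext l
    simp only [mem_filter, mem_univ, true_and, mem_map, Fin.coe_castLEEmb]
    exact ⟨fun hl => ⟨⟨l, hl⟩, rfl⟩, by rintro ⟨k, rfl⟩; exact k.isLt⟩
  rw [hset, prod_map]
  rfl

theorem stmt_15 (n : ℕ) (b bstar : Fin n → (Fin n → ℝ)) (μ : Fin n → Fin n → ℝ)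
    (hind : LinearIndependent ℝ b)
    (hGS : ∀ i, bstar i = b i - ∑ l ∈ Finset.Iio i, μ i l • bstar l)
    (hμ : ∀ i l : Fin n, l < i →
      μ i l = (∑ k, b i k * bstar l k) / (∑ k, bstar l k * bstar l k))
    (B : ℝ) (hB : ∀ i, ∑ k, b i k ^ 2 ≤ B)
    (L : ℝ) (hL : 0 < L)
    (hmin : ∀ c : Fin n → ℤ, (∑ i, (c i : ℝ) • b i) ≠ 0 →
      L ≤ ∑ k, (∑ i, (c i : ℝ) • b i) k ^ 2) :
    (L / (n : ℝ)) ^ (n * (n + 1) / 2) ≤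
        (∏ j ∈ Finset.range n,
          ∏ l ∈ Finset.univ.filter fun l : Fin n => (l : ℕ) < j + 1,
            ∑ k, bstar l k ^ 2) ∧
      (∏ j ∈ Finset.range n,
          ∏ l ∈ Finset.univ.filter fun l : Fin n => (l : ℕ) < j + 1,
            ∑ k, bstar l k ^ 2) ≤ B ^ (n * (n + 1) / 2) := by
  have hGS' : IsGramSchmidt b bstar := fun i => (hGS i).trans <| by
    congr 1
    exact sum_congr rfl fun l hl => by rw [hμ i l (mem_Iio.1 hl)]; rfl
  simp only [sum_sq_eq_dotProduct_self] at hB hmin ⊢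
  have hlat : ∀ v ∈ Submodule.span ℤ (Set.range b), v ≠ 0 → L ≤ v ⬝ᵥ v := by
    intro v hv hv0
    obtain ⟨c, rfl⟩ := (Submodule.mem_span_range_iff_exists_fun ℤ).1 hv
    simp only [← Int.cast_smul_eq_zsmul ℝ] at hv0 ⊢
    exact hmin c hv0
  rw [pow_mul_succ_div_two_eq_prod_range, pow_mul_succ_div_two_eq_prod_range]
  constructor
  · refine prod_le_prod (fun _ _ => by positivity) fun j hj => ?_
    have hjn : j + 1 ≤ n := mem_range.1 hj
    rw [prod_filter_val_lt_eq_prod_castLE hjn]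
    calc (L / n) ^ (j + 1) ≤ (L / (j + 1 : ℕ)) ^ (j + 1) := by gcongr
      _ ≤ _ := (hGS'.comp_castLE hjn).div_pow_le_prod_dotProduct_self
          (hind.comp _ (Fin.castLE_injective hjn)) hL.le fun v hv =>
            hlat v (Submodule.span_mono (Set.range_comp_subset_range _ _) hv)
  · refine prod_le_prod (fun _ _ => prod_nonneg fun _ _ => dotProduct_self_nonneg _)
      fun j hj => ?_
    have hjn : j + 1 ≤ n := mem_range.1 hj
    rw [prod_filter_val_lt_eq_prod_castLE hjn]
    simpa using (hGS'.comp_castLE hjn).prod_dotProduct_self_le_pow fun i => hB _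
end
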